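/- A permutation avoids the generalized pattern 31-2 if and only if it avoids the classical pattern 3-1-2; that is, for π in S_n, there exist indices i < i+1 < k with π(i+1) < π(k) < π(i) if and only if there exist indices i < j < k with π(j) < π(k) < π(i). -/

import Mathlib

/-! If `π j < π k < π i` with `i < j < k`, walk from `i` to `j`: the values start above `π k` and
end below it, so some adjacent pair `m, m + 1` in `[i, j]` crosses `π k` downwards, and
`π (m + 1) ≠ π k` because `m + 1 ≤ j < k`. This pair together with `k` is an occurrence of 31-2. -/

theorem Nat.exists_le_lt_and_not_succ_of_le {p : ℕ → Prop} {a b : ℕ} (hab : a ≤ b) (ha : p a)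
    (hb : ¬p b) : ∃ m, a ≤ m ∧ m < b ∧ p m ∧ ¬p (m + 1) := by
  induction b, hab using Nat.le_induction with
  | base => exact absurd ha hb
  | succ b hab ih =>
    by_cases hpb : p b
    · exact ⟨b, hab, b.lt_succ_self, hpb, hb⟩
    · obtain ⟨m, ham, hmb, hm, hm'⟩ := ih hpb
      exact ⟨m, ham, hmb.trans b.lt_succ_self, hm, hm'⟩

theorem Function.Injective.exists_adjacent_31_2_of_3_1_2 {α : Type*} [LinearOrder α] {n : ℕ}
    {f : Fin n → α} (hf : Function.Injective f) {i j k : Fin n} (hij : i < j) (hjk : j < k)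
    (hj : f j < f k) (hi : f k < f i) :
    ∃ a b : Fin n, (b : ℕ) = (a : ℕ) + 1 ∧ b < k ∧ f b < f k ∧ f k < f a := by
  obtain ⟨m, -, hmj, hm, hm'⟩ :=
    Nat.exists_le_lt_and_not_succ_of_le (p := fun m => ∀ h : m < n, f k < f ⟨m, h⟩)
      hij.le (fun _ => hi) (fun h => hj.asymm (h j.isLt))
  let b : Fin n := ⟨m + 1, Nat.lt_of_le_of_lt hmj j.isLt⟩
  have hbk : b < k := Nat.lt_of_le_of_lt hmj hjk
  have hb : f b ≤ f k := not_lt.1 fun h => hm' fun _ => h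
  exact ⟨⟨m, hmj.trans j.isLt⟩, b, rfl, hbk, hb.lt_of_ne (hf.ne hbk.ne), hm _⟩

theorem pattern_31_2_iff_3_1_2 (n : ℕ) (π : Equiv.Perm (Fin n)) :
    (∃ i j k : Fin n, (j : ℕ) = (i : ℕ) + 1 ∧ j < k ∧ π j < π k ∧ π k < π i) ↔
      (∃ i j k : Fin n, i < j ∧ j < k ∧ π j < π k ∧ π k < π i) := by
  constructor
  · rintro ⟨i, j, k, hji, hjk, hj, hi⟩
    exact ⟨i, j, k, Fin.lt_def.2 (by omega), hjk, hj, hi⟩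
  · rintro ⟨i, j, k, hij, hjk, hj, hi⟩
    obtain ⟨a, b, hba, hbk, hb, ha⟩ := π.injective.exists_adjacent_31_2_of_3_1_2 hij hjk hj hi
    exact ⟨a, b, k, hba, hbk, hb, ha⟩
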